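/- arXiv:1012.5535 — 5 statements merged into one kernel-verified Lean document; each statement's English description precedes it below -/
import Mathlib

section
/- L_a is strictly increasing on [0,1]. -/
open Topology Filter Set

/-- The de Rham functional equation characterizing Lebesgue's singular function `L_a`
on `[0,1]`, together with continuity. -/
def deRham (a : ℝ) (L : ℝ → ℝ) : Prop :=
  ContinuousOn L (Set.Icc 0 1) ∧
  (∀ x ∈ Set.Icc (0:ℝ) (1/2), L x = a * L (2*x)) ∧
  (∀ x ∈ Set.Icc (1/2:ℝ) 1, L x = (1-a) * L (2*x - 1) + a)

theorem lebesgue_singular_strictMonoOn (a : ℝ) (ha0 : 0 < a) (ha1 : a < 1)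
    (ha : a ≠ 1/2) (L : ℝ → ℝ) (hL : deRham a L) :
    StrictMonoOn L (Set.Icc 0 1) := by
  obtain ⟨hc, hleft, hright⟩ := hL
  have ha1' : (0:ℝ) < 1 - a := by linarith
  have L0 : L 0 = 0 := by
    have h := hleft 0 (by norm_num)
    rw [show (2:ℝ) * 0 = 0 by ring] at h
    have h2 : (1 - a) * L 0 = 0 := by linear_combination h
    rcases mul_eq_zero.mp h2 with h3 | h3
    · linarith
    · exact h3
  have L1 : L 1 = 1 := by
    have h := hright 1 (by norm_num)
    rw [show (2:ℝ) * 1 - 1 = 1 by ring] at h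
    have h2 : a * L 1 = a := by linear_combination h
    exact mul_left_cancel₀ (ne_of_gt ha0) (h2.trans (mul_one a).symm)
  -- membership helpers
  have memL : ∀ x : ℝ, x ∈ Icc (0:ℝ) 1 → x ≤ 1/2 → (2*x) ∈ Icc (0:ℝ) 1 := by
    intro x hx hx2; exact ⟨by linarith [hx.1], by linarith⟩
  have memR : ∀ x : ℝ, x ∈ Icc (0:ℝ) 1 → 1/2 ≤ x → (2*x - 1) ∈ Icc (0:ℝ) 1 := by
    intro x hx hx2; exact ⟨by linarith, by linarith [hx.2]⟩
  -- upper bound L ≤ 1 on [0,1]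
  have Lle1 : ∀ x ∈ Icc (0:ℝ) 1, L x ≤ 1 := by
    obtain ⟨m, hm, hmax⟩ := isCompact_Icc.exists_isMaxOn (⟨0, by norm_num, by norm_num⟩ :
      (Icc (0:ℝ) 1).Nonempty) hc
    have h1le : (1:ℝ) ∈ Icc (0:ℝ) 1 := ⟨by norm_num, le_refl 1⟩
    have hM1 : 1 ≤ L m := by simpa [L1] using hmax h1le
    rcases le_or_gt m (1/2) with hm2 | hm2
    · -- contradiction: L m ≤ a * L m
      exfalso
      have h := hleft m ⟨hm.1, hm2⟩
      have h2 : L (2*m) ≤ L m := hmax (memL m hm hm2)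
      nlinarith
    · have h := hright m ⟨le_of_lt hm2, hm.2⟩
      have h2 : L (2*m - 1) ≤ L m := hmax (memR m hm (le_of_lt hm2))
      intro x hx
      have h3 : L x ≤ L m := hmax hx
      nlinarith
  -- lower bound 0 ≤ L on [0,1]
  have Lge0 : ∀ x ∈ Icc (0:ℝ) 1, 0 ≤ L x := by
    obtain ⟨m, hm, hmin⟩ := isCompact_Icc.exists_isMinOn (⟨0, by norm_num, by norm_num⟩ :
      (Icc (0:ℝ) 1).Nonempty) hc
    have h0 : (0:ℝ) ∈ Icc (0:ℝ) 1 := ⟨le_refl 0, by norm_num⟩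
    have hM0 : L m ≤ 0 := by simpa [L0] using hmin h0
    rcases lt_or_ge m (1/2) with hm2 | hm2
    · have h := hleft m ⟨hm.1, le_of_lt hm2⟩
      have h2 : L m ≤ L (2*m) := hmin (memL m hm (le_of_lt hm2))
      intro x hx
      have h3 : L m ≤ L x := hmin hx
      nlinarith
    · exfalso
      have h := hright m ⟨hm2, hm.2⟩
      have h2 : L m ≤ L (2*m - 1) := hmin (memR m hm hm2)
      nlinarith
  -- strict upper bound away from 1
  have Llt1 : ∀ n : ℕ, ∀ x ∈ Icc (0:ℝ) 1, x ≤ 1 - (1/2)^n → L x < 1 := by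
    intro n
    induction n with
    | zero =>
      intro x hx hxn
      have : x = 0 := le_antisymm (by norm_num at hxn; linarith) hx.1
      rw [this, L0]; norm_num
    | succ k ih =>
      intro x hx hxn
      rcases le_or_gt x (1/2) with hx2 | hx2
      · have h := hleft x ⟨hx.1, hx2⟩
        have h2 : L (2*x) ≤ 1 := Lle1 _ (memL x hx hx2)
        nlinarith
      · have h := hright x ⟨le_of_lt hx2, hx.2⟩
        have hmem := memR x hx (le_of_lt hx2)
        have h2 : L (2*x - 1) < 1 := by
          apply ih _ hmem
          have : ((1:ℝ)/2)^(k+1) = (1/2)^k / 2 := by ring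
          rw [this] at hxn
          linarith
        nlinarith
  -- strict lower bound away from 0
  have Lgt0 : ∀ n : ℕ, ∀ x ∈ Icc (0:ℝ) 1, (1/2)^n ≤ x → 0 < L x := by
    intro n
    induction n with
    | zero =>
      intro x hx hxn
      have : x = 1 := le_antisymm hx.2 (by norm_num at hxn; linarith)
      rw [this, L1]; norm_num
    | succ k ih =>
      intro x hx hxn
      rcases le_or_gt x (1/2) with hx2 | hx2
      · have h := hleft x ⟨hx.1, hx2⟩
        have hmem := memL x hx hx2
        have h2 : 0 < L (2*x) := by
          apply ih _ hmem
          have : ((1:ℝ)/2)^(k+1) = (1/2)^k / 2 := by ring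
          rw [this] at hxn
          linarith
        nlinarith
      · have h := hright x ⟨le_of_lt hx2, hx.2⟩
        have h2 : 0 ≤ L (2*x - 1) := Lge0 _ (memR x hx (le_of_lt hx2))
        nlinarith
  have Llt1' : ∀ x ∈ Icc (0:ℝ) 1, x < 1 → L x < 1 := by
    intro x hx hx1
    obtain ⟨n, hn⟩ := exists_pow_lt_of_lt_one (show (0:ℝ) < 1 - x by linarith)
      (by norm_num : (1:ℝ)/2 < 1)
    exact Llt1 n x hx (by linarith)
  -- key dyadic induction
  have key : ∀ n : ℕ, ∀ x y : ℝ, x ∈ Icc (0:ℝ) 1 → y ∈ Icc (0:ℝ) 1 → x < y →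
      (1/2)^n ≤ y - x → L x < L y := by
    intro n
    induction n with
    | zero =>
      intro x y hx hy hxy hd
      norm_num at hd
      have hx0 : x = 0 := le_antisymm (by linarith [hy.2]) hx.1
      have hy1 : y = 1 := le_antisymm hy.2 (by linarith [hx.1])
      rw [hx0, hy1, L0, L1]; norm_num
    | succ k ih =>
      intro x y hx hy hxy hd
      have hhalf : ((1:ℝ)/2)^(k+1) = (1/2)^k / 2 := by ring
      rw [hhalf] at hd
      rcases le_or_gt y (1/2) with hy2 | hy2
      · -- both in left half
        have hfx := hleft x ⟨hx.1, by linarith⟩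
        have hfy := hleft y ⟨hy.1, hy2⟩
        have h2 : L (2*x) < L (2*y) := by
          apply ih _ _ (memL x hx (by linarith)) (memL y hy hy2) (by linarith)
          linarith
        nlinarith
      · rcases le_or_gt (1/2) x with hx2 | hx2
        · -- both in right half
          have hfx := hright x ⟨hx2, hx.2⟩
          have hfy := hright y ⟨by linarith, hy.2⟩
          have h2 : L (2*x - 1) < L (2*y - 1) := by
            apply ih _ _ (memR x hx hx2) (memR y hy (by linarith)) (by linarith)
            linarith
          nlinarith
        · -- x < 1/2 < y (crossing)
          have hfx := hleft x ⟨hx.1, le_of_lt hx2⟩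
          have hfy := hright y ⟨le_of_lt hy2, hy.2⟩
          have hxlt : L x < a := by
            have hmem := memL x hx (le_of_lt hx2)
            have h2 : L (2*x) < 1 := Llt1' _ hmem (by linarith)
            nlinarith
          have hyge : a ≤ L y := by
            have h2 : 0 ≤ L (2*y - 1) := Lge0 _ (memR y hy (le_of_lt hy2))
            nlinarith
          linarith
  intro x hx y hy hxy
  obtain ⟨n, hn⟩ := exists_pow_lt_of_lt_one (show (0:ℝ) < y - x by linarith)
    (by norm_num : (1:ℝ)/2 < 1)
  exact key n x y hx hy hxy (le_of_lt hn)
end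

section
/- (Lomnicki–Ulam expansion) For every x ∈ [0,1] with binary expansion x = Σ_{k≥1} ε_k 2^{-k} (ε_k ∈ {0,1}), one has L_a(x) = (a/(1-a)) · Σ_{n≥1} ε_n · a^{n - I_n} · (1-a)^{I_n}, where I_n = ε_1 + ⋯ + ε_n. -/
/-!
Reading off the first binary digit `e`, the functional equation gives
`L (0.e d₁ d₂ …) = w_e · L (0.d₁ d₂ …) + a · e` with `w₀ = a`, `w₁ = 1 - a`. Iterating `N` times
writes `L x` as the `N`-th partial sum of the series plus the remainder
`w_{d₀} ⋯ w_{d_{N-1}} · L (tail)`, which tends to `0` because every weight is at most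
`max a (1 - a) < 1` and `L` is bounded on `[0, 1]`. Finally, a digit `1` has weight `1 - a`, which
turns `a · w_{d₀} ⋯ w_{d_{n-1}}` into `a / (1 - a) · w_{d₀} ⋯ w_{d_n}` on the terms where `d_n = 1`.
-/

open Topology Filter Set

open Finset Real

theorem Real.ofDigits_mem_Icc {b : ℕ} (d : ℕ → Fin b) : ofDigits d ∈ Set.Icc 0 1 :=
  ⟨ofDigits_nonneg d, ofDigits_le_one d⟩

theorem Real.ofDigits_shift_eq_div_two (d : ℕ → Fin 2) (n : ℕ) :
    ofDigits (fun i ↦ d (i + n)) = ((d n : ℝ) + ofDigits (fun i ↦ d (i + (n + 1)))) / 2 := by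
  rw [ofDigits_eq_sum_add_ofDigits _ 1]
  simp only [ofDigitsTerm, range_one, sum_singleton, zero_add, add_right_comm _ 1 n, add_assoc]
  push_cast
  ring

/-- The increment of `L_a` over the dyadic interval of rank `n` with binary prefix
`d 0, …, d (n - 1)`. -/
noncomputable def dyadicMass (a : ℝ) (d : ℕ → Fin 2) (n : ℕ) : ℝ :=
  ∏ j ∈ range n, ![a, 1 - a] (d j)

section dyadicMass

variable {a : ℝ}

theorem weight_nonneg (ha0 : 0 ≤ a) (ha1 : a ≤ 1) (e : Fin 2) : 0 ≤ ![a, 1 - a] e := by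
  fin_cases e <;> simp [ha0, ha1]

theorem weight_le_max (e : Fin 2) : ![a, 1 - a] e ≤ max a (1 - a) := by
  fin_cases e <;> simp

theorem digit_mul_weight (e : Fin 2) : (e : ℝ) * ![a, 1 - a] e = (1 - a) * e := by
  fin_cases e <;> simp

variable (d : ℕ → Fin 2)

theorem dyadicMass_succ (n : ℕ) :
    dyadicMass a d (n + 1) = dyadicMass a d n * ![a, 1 - a] (d n) :=
  prod_range_succ _ _

theorem dyadicMass_eq_pow_mul_pow (n : ℕ) :
    dyadicMass a d n =
      a ^ (n - ∑ j ∈ range n, (d j : ℕ)) * (1 - a) ^ (∑ j ∈ range n, (d j : ℕ)) := by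
  induction n with
  | zero => simp [dyadicMass]
  | succ n ih =>
    have hle : ∑ j ∈ range n, (d j : ℕ) ≤ n :=
      (sum_le_card_nsmul _ _ 1 fun j _ ↦ Nat.le_of_lt_succ (d j).isLt).trans (by simp)
    rw [dyadicMass_succ, ih, sum_range_succ]
    generalize d n = e
    fin_cases e
    · simp [Nat.sub_add_comm hle, pow_succ]; ring
    · simp [pow_succ]; ring

theorem dyadicMass_nonneg (ha0 : 0 ≤ a) (ha1 : a ≤ 1) (n : ℕ) : 0 ≤ dyadicMass a d n :=
  prod_nonneg fun j _ ↦ weight_nonneg ha0 ha1 (d j)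

theorem dyadicMass_le_pow (ha0 : 0 ≤ a) (ha1 : a ≤ 1) (n : ℕ) :
    dyadicMass a d n ≤ max a (1 - a) ^ n :=
  calc dyadicMass a d n ≤ ∏ _j ∈ range n, max a (1 - a) :=
        prod_le_prod (fun j _ ↦ weight_nonneg ha0 ha1 (d j)) (fun j _ ↦ weight_le_max (d j))
    _ = max a (1 - a) ^ n := by rw [prod_const, card_range]

theorem tendsto_dyadicMass_atTop (ha0 : 0 < a) (ha1 : a < 1) :
    Tendsto (dyadicMass a d) atTop (𝓝 0) :=
  squeeze_zero (dyadicMass_nonneg d ha0.le ha1.le) (dyadicMass_le_pow d ha0.le ha1.le)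
    (tendsto_pow_atTop_nhds_zero_of_lt_one (le_max_of_le_left ha0.le)
      (max_lt ha1 (by linarith)))

end dyadicMass

namespace deRham

variable {a : ℝ} {L : ℝ → ℝ}

theorem apply_digit_add_div_two (hL : deRham a L) (e : Fin 2) {t : ℝ} (ht : t ∈ Set.Icc 0 1) :
    L ((e + t) / 2) = ![a, 1 - a] e * L t + a * e := by
  obtain ⟨-, hleft, hright⟩ := hL
  fin_cases e
  · simpa [mul_div_cancel₀] using hleft (t / 2) ⟨by linarith [ht.1], by linarith [ht.2]⟩
  · simpa [show 2 * ((1 + t) / 2) - 1 = t by ring] using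
      hright ((1 + t) / 2) ⟨by linarith [ht.1], by linarith [ht.2]⟩

theorem eq_sum_add_dyadicMass_mul (hL : deRham a L) (d : ℕ → Fin 2) (N : ℕ) :
    L (ofDigits d) = ∑ k ∈ range N, a * d k * dyadicMass a d k
      + dyadicMass a d N * L (ofDigits (fun i ↦ d (i + N))) := by
  induction N with
  | zero => simp [dyadicMass]
  | succ N ih =>
    rw [ih, ofDigits_shift_eq_div_two d N,
      hL.apply_digit_add_div_two _ (ofDigits_mem_Icc _), sum_range_succ, dyadicMass_succ]
    ring

theorem hasSum_ofDigits (hL : deRham a L) (ha0 : 0 < a) (ha1 : a < 1) (d : ℕ → Fin 2) :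
    HasSum (fun k ↦ a * d k * dyadicMass a d k) (L (ofDigits d)) := by
  rw [hasSum_iff_tendsto_nat_of_nonneg
    (fun k ↦ by have := dyadicMass_nonneg d ha0.le ha1.le k; positivity)]
  obtain ⟨C, hC⟩ := isCompact_Icc.exists_bound_of_continuousOn hL.1
  have hrem : Tendsto (fun N ↦ dyadicMass a d N * L (ofDigits (fun i ↦ d (i + N))))
      atTop (𝓝 0) :=
    (tendsto_dyadicMass_atTop d ha0 ha1).zero_mul_isBoundedUnder_le
      ⟨C, eventually_map.2 (Eventually.of_forall fun N ↦ hC _ (ofDigits_mem_Icc _))⟩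
  simpa using (tendsto_const_nhds (x := L (ofDigits d))).sub hrem |>.congr fun N ↦
    sub_eq_of_eq_add (hL.eq_sum_add_dyadicMass_mul d N)

end deRham

theorem lomnicki_ulam_expansion_general (a : ℝ) (ha0 : 0 < a) (ha1 : a < 1)
    (L : ℝ → ℝ) (hL : deRham a L)
    (ε : ℕ → ℕ) (hε : ∀ n, ε n ≤ 1)
    (x : ℝ) (hx : x = ∑' n : ℕ, (ε (n+1) : ℝ) / 2 ^ (n+1))
    (I : ℕ → ℕ) (hI : ∀ n, I n = ∑ k ∈ Finset.range n, ε (k+1)) :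
    L x = a / (1-a) *
      ∑' n : ℕ, (ε (n+1) : ℝ) * a ^ (n + 1 - I (n+1)) * (1-a) ^ (I (n+1)) := by
  set d : ℕ → Fin 2 := fun k ↦ ⟨ε (k + 1), Nat.lt_succ_of_le (hε (k + 1))⟩
  have hxd : x = ofDigits d := by
    simp only [hx, ofDigits, ofDigitsTerm, d, div_eq_mul_inv]
    norm_num
  have hterm : ∀ n, (ε (n+1) : ℝ) * a ^ (n + 1 - I (n+1)) * (1-a) ^ (I (n+1)) =
      d n * dyadicMass a d (n + 1) := fun n ↦ by
    rw [hI, dyadicMass_eq_pow_mul_pow, mul_assoc]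
  have h1a : 1 - a ≠ 0 := by linarith
  rw [hxd, ← tsum_mul_left, ← (hL.hasSum_ofDigits ha0 ha1 d).tsum_eq]
  congr 1 with n
  rw [hterm, dyadicMass_succ]
  calc a * d n * dyadicMass a d n = a / (1 - a) * dyadicMass a d n * ((1 - a) * d n) := by
        field_simp
    _ = _ := by rw [← digit_mul_weight]; ring

theorem lomnicki_ulam_expansion (a : ℝ) (ha0 : 0 < a) (ha1 : a < 1)
    (ha : a ≠ 1/2) (L : ℝ → ℝ) (hL : deRham a L)
    (ε : ℕ → ℕ) (hε : ∀ n, ε n ≤ 1)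
    (x : ℝ) (hx : x = ∑' n : ℕ, (ε (n+1) : ℝ) / 2 ^ (n+1))
    (I : ℕ → ℕ) (hI : ∀ n, I n = ∑ k ∈ Finset.range n, ε (k+1)) :
    L x = a / (1-a) *
      ∑' n : ℕ, (ε (n+1) : ℝ) * a ^ (n + 1 - I (n+1)) * (1-a) ^ (I (n+1)) :=
  lomnicki_ulam_expansion_general a ha0 ha1 L hL ε hε x hx I hI
end

section
/- If x = j/2^N ∈ [0,1) is a dyadic rational and 0 < a < 1/2, then the right-hand derivative of L_a at x equals 0. -/
/-!
Iterating the first functional equation gives `L (2⁻ⁿ s) = aⁿ L s`, so `L = O(aⁿ)` on `[0, 2⁻ⁿ]`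
and `L t / t = O((2a)ⁿ)` for `t ∈ (2⁻ⁿ⁻¹, 2⁻ⁿ]`; as `2a < 1`, the right derivative at `0` vanishes.
Near `x ∈ [0, 1)` the functional equations write `L (x + h) - L x` as `a` or `1 - a` times the
increment of `L` at `2x` or `2x - 1` with step `2h`, so the difference quotient at `x` is a
multiple of the one at the doubled point, and `N` doublings take `j / 2^N` to `0`.
-/

open Topology Filter Set

theorem tendsto_slope_of_eventually_eq_mul {f g : ℝ → ℝ} {x y : ℝ} (c : ℝ)
    (hg : Tendsto (fun h : ℝ => (g (y + h) - g y) / h) (𝓝[>] 0) (𝓝 0))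
    (hfg : ∀ᶠ h in 𝓝[>] 0, f (x + h) - f x = c * (g (y + 2 * h) - g y)) :
    Tendsto (fun h : ℝ => (f (x + h) - f x) / h) (𝓝[>] 0) (𝓝 0) := by
  have h2 : Tendsto (fun h : ℝ => 2 * h) (𝓝[>] 0) (𝓝[>] 0) := by
    simpa only [mul_zero, id] using
      TendstoNhdsWithinIoi.const_mul two_pos (tendsto_id (x := 𝓝[>] (0 : ℝ)))
  have hlim := (hg.comp h2).const_mul (2 * c)
  rw [mul_zero] at hlim
  refine hlim.congr' ?_
  filter_upwards [hfg, self_mem_nhdsWithin] with h hh (hpos : 0 < h)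
  simp only [Function.comp_apply, hh]
  field_simp

namespace deRham

variable {a : ℝ} {L : ℝ → ℝ}

theorem map_zero (hL : deRham a L) (ha : a ≠ 1) : L 0 = 0 := by
  have h := hL.2.1 0 ⟨le_rfl, by norm_num⟩
  rw [mul_zero] at h
  have : (1 - a) * L 0 = 0 := by linear_combination h
  exact (mul_eq_zero.mp this).resolve_left (sub_ne_zero.mpr (Ne.symm ha))

theorem map_half_pow_mul (hL : deRham a L) (n : ℕ) {s : ℝ} (hs : s ∈ Icc (0 : ℝ) 1) :
    L ((1 / 2) ^ n * s) = a ^ n * L s := by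
  induction n with
  | zero => simp
  | succ n ih =>
    have hmem : (1 / 2 : ℝ) ^ (n + 1) * s ∈ Icc (0 : ℝ) (1 / 2) := by
      have : (1 / 2 : ℝ) ^ n ≤ 1 := pow_le_one₀ (by norm_num) (by norm_num)
      constructor
      · exact mul_nonneg (by positivity) hs.1
      · rw [pow_succ]
        nlinarith [hs.1, hs.2, pow_nonneg (by norm_num : (0 : ℝ) ≤ 1 / 2) n]
    rw [hL.2.1 _ hmem, show 2 * ((1 / 2 : ℝ) ^ (n + 1) * s) = (1 / 2) ^ n * s by ring, ih]
    ring

theorem abs_le_of_le_half_pow (hL : deRham a L) (ha0 : 0 ≤ a) {C : ℝ}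
    (hC : ∀ s ∈ Icc (0 : ℝ) 1, |L s| ≤ C) {n : ℕ} {t : ℝ} (ht0 : 0 ≤ t)
    (ht : t ≤ (1 / 2) ^ n) : |L t| ≤ C * a ^ n := by
  have hs : 2 ^ n * t ∈ Icc (0 : ℝ) 1 := by
    refine ⟨by positivity, ?_⟩
    calc 2 ^ n * t ≤ 2 ^ n * (1 / 2) ^ n := by gcongr
      _ = 1 := by rw [← mul_pow]; norm_num
  have ht_eq : t = (1 / 2) ^ n * (2 ^ n * t) := by
    rw [← mul_assoc, ← mul_pow]; norm_num
  rw [ht_eq, hL.map_half_pow_mul n hs, abs_mul, abs_of_nonneg (pow_nonneg ha0 n), mul_comm]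
  exact mul_le_mul_of_nonneg_right (hC _ hs) (pow_nonneg ha0 n)

theorem abs_div_le_of_le_half_pow (hL : deRham a L) (ha0 : 0 ≤ a) (ha : a ≤ 1 / 2) {C : ℝ}
    (hC : ∀ s ∈ Icc (0 : ℝ) 1, |L s| ≤ C) {n : ℕ} {t : ℝ} (ht0 : 0 < t)
    (ht : t ≤ (1 / 2) ^ n) : |L t / t| ≤ 2 * C * (2 * a) ^ n := by
  have hC0 : 0 ≤ C := (abs_nonneg _).trans (hC 0 ⟨le_rfl, zero_le_one⟩)
  obtain ⟨m, htm, htm'⟩ := exists_nat_pow_near_of_lt_one ht0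
    (ht.trans (pow_le_one₀ (by norm_num) (by norm_num))) (by norm_num : (0 : ℝ) < 1 / 2)
    (by norm_num)
  have hnm : n ≤ m := Nat.lt_succ_iff.mp <|
    (pow_lt_pow_iff_right_of_lt_one₀ (by norm_num : (0 : ℝ) < 1 / 2) (by norm_num)).mp
      (htm.trans_le ht)
  calc |L t / t| = |L t| / t := by rw [abs_div, abs_of_pos ht0]
    _ ≤ C * a ^ m / (1 / 2) ^ (m + 1) :=
        div_le_div₀ (by positivity) (hL.abs_le_of_le_half_pow ha0 hC ht0.le htm') (by positivity)
          htm.le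
    _ = 2 * C * (2 * a) ^ m := by rw [one_div, inv_pow, div_inv_eq_mul, mul_pow, pow_succ]; ring
    _ ≤ 2 * C * (2 * a) ^ n :=
        mul_le_mul_of_nonneg_left (pow_le_pow_of_le_one (by positivity) (by linarith) hnm)
          (by positivity)

theorem tendsto_div_self_nhdsGT_zero (hL : deRham a L) (ha0 : 0 < a) (ha : a < 1 / 2) :
    Tendsto (fun t : ℝ => L t / t) (𝓝[>] 0) (𝓝 0) := by
  obtain ⟨C, hC⟩ := isCompact_Icc.exists_bound_of_continuousOn hL.1
  have hbound : Tendsto (fun n : ℕ => 2 * C * (2 * a) ^ n) atTop (𝓝 0) := by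
    simpa using (tendsto_pow_atTop_nhds_zero_of_lt_one (by linarith) (by linarith)).const_mul
      (2 * C)
  rw [Metric.tendsto_nhds]
  intro ε hε
  obtain ⟨n, hn⟩ := (hbound.eventually (gt_mem_nhds hε)).exists
  filter_upwards [Ioo_mem_nhdsGT (by positivity : (0 : ℝ) < (1 / 2) ^ n)] with t ht
  rw [Real.dist_eq, sub_zero]
  exact (hL.abs_div_le_of_le_half_pow ha0.le ha.le hC ht.1 ht.2.le).trans_lt hn

theorem tendsto_slope_of_lt_half (hL : deRham a L) {x y : ℝ} (hx0 : 0 ≤ x) (hx : x < 1 / 2)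
    (hy : 2 * x = y) (hslope : Tendsto (fun h : ℝ => (L (y + h) - L y) / h) (𝓝[>] 0) (𝓝 0)) :
    Tendsto (fun h : ℝ => (L (x + h) - L x) / h) (𝓝[>] 0) (𝓝 0) := by
  refine tendsto_slope_of_eventually_eq_mul a hslope ?_
  filter_upwards [Ioo_mem_nhdsGT (sub_pos.mpr hx)] with h ⟨hh0, hh⟩
  rw [hL.2.1 x ⟨hx0, hx.le⟩, hL.2.1 (x + h) ⟨by linarith, by linarith⟩, ← hy]
  ring_nf

theorem tendsto_slope_of_half_le (hL : deRham a L) {x y : ℝ} (hx : 1 / 2 ≤ x) (hx1 : x < 1)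
    (hy : 2 * x - 1 = y) (hslope : Tendsto (fun h : ℝ => (L (y + h) - L y) / h) (𝓝[>] 0) (𝓝 0)) :
    Tendsto (fun h : ℝ => (L (x + h) - L x) / h) (𝓝[>] 0) (𝓝 0) := by
  refine tendsto_slope_of_eventually_eq_mul (1 - a) hslope ?_
  filter_upwards [Ioo_mem_nhdsGT (sub_pos.mpr hx1)] with h ⟨hh0, hh⟩
  rw [hL.2.2 x ⟨hx, hx1.le⟩, hL.2.2 (x + h) ⟨by linarith, by linarith⟩, ← hy]
  ring_nf

theorem tendsto_slope_dyadic (hL : deRham a L) (ha0 : 0 < a) (ha : a < 1 / 2) (N j : ℕ)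
    (hj : j < 2 ^ N) : Tendsto (fun h : ℝ => (L ((j : ℝ) / 2 ^ N + h) - L ((j : ℝ) / 2 ^ N)) / h)
      (𝓝[>] 0) (𝓝 0) := by
  induction N generalizing j with
  | zero =>
    obtain rfl : j = 0 := Nat.lt_one_iff.mp (by simpa using hj)
    simpa [hL.map_zero (ha.trans (by norm_num)).ne] using hL.tendsto_div_self_nhdsGT_zero ha0 ha
  | succ N ih =>
    rcases lt_or_ge j (2 ^ N) with hjN | hjN
    · have hjN' : (j : ℝ) < 2 ^ N := by exact_mod_cast hjN
      refine hL.tendsto_slope_of_lt_half (x := (j : ℝ) / 2 ^ (N + 1)) (by positivity) ?_ ?_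
        (ih j hjN)
      · rw [pow_succ, div_lt_iff₀ (by positivity)]; linarith
      · rw [pow_succ]; field_simp
    · obtain ⟨i, rfl⟩ := Nat.exists_eq_add_of_le hjN
      have hi : i < 2 ^ N := by rw [pow_succ] at hj; omega
      have hi' : (i : ℝ) < 2 ^ N := by exact_mod_cast hi
      refine hL.tendsto_slope_of_half_le ?_ ?_ ?_ (ih i hi)
      · push_cast; rw [pow_succ, le_div_iff₀ (by positivity)]; linarith [i.cast_nonneg (α := ℝ)]
      · push_cast; rw [pow_succ, div_lt_iff₀ (by positivity)]; linarith
      · push_cast; rw [pow_succ]; field_simp; ring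

end deRham

theorem right_deriv_zero_at_dyadic (a : ℝ) (ha0 : 0 < a) (ha : a < 1/2)
    (L : ℝ → ℝ) (hL : deRham a L)
    (x : ℝ) (j N : ℕ) (hx : x = (j : ℝ) / 2 ^ N) (hx1 : x < 1) :
    Tendsto (fun h : ℝ => (L (x+h) - L x) / h) (𝓝[>] 0) (𝓝 0) := by
  have hj : j < 2 ^ N := by
    rw [hx, div_lt_one (by positivity)] at hx1
    exact_mod_cast hx1
  subst hx
  exact hL.tendsto_slope_dyadic ha0 ha N j hj
end

section
/- Let x ∈ [0,1] be non-dyadic with binary digits ε_k, let I_n = ε_1+⋯+ε_n, and suppose D_1(x) := lim_{n→∞} I_n/n exists with 0 < D_1(x) < 1, and set D_0(x) = 1 - D_1(x). If a^{D_0(x)}·(1-a)^{D_1(x)} < 1/2, then L_a'(x) = 0. -/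
open Topology Filter Set

theorem tendsto_div_nhdsGT_zero_of_abs_le {φ : ℝ → ℝ} {δ ω : ℕ → ℝ} (hδ : ∀ n, 0 < δ n)
    (hδ₀ : Tendsto δ atTop (𝓝 0)) (hφ : ∀ n, ∀ h ∈ Ioc 0 (δ n), |φ h| ≤ ω n)
    (hω : Tendsto (fun n => ω n / δ (n + 1)) atTop (𝓝 0)) :
    Tendsto (fun h => φ h / h) (𝓝[>] 0) (𝓝 0) := by
  rw [Metric.tendsto_nhdsWithin_nhds]
  intro η hη
  obtain ⟨N, hN⟩ := eventually_atTop.1 (hω.eventually (gt_mem_nhds hη))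
  refine ⟨δ N, hδ N, fun h (hh : 0 < h) hhN => ?_⟩
  rw [Real.dist_0_eq_abs, abs_of_pos hh] at hhN
  obtain ⟨n, hnN, hn⟩ : ∃ n ≥ N, δ (n + 1) < h ∧ h ≤ δ n := by
    by_contra! H
    have hle : ∀ n ≥ N, h ≤ δ n := fun n hn => Nat.le_induction hhN.le
      (fun m hm ih => not_lt.1 fun hlt => (H m hm hlt).not_ge ih) n hn
    obtain ⟨M, hM⟩ := eventually_atTop.1 (hδ₀.eventually (gt_mem_nhds hh))
    exact (hle (max N M) (le_max_left _ _)).not_gt (hM _ (le_max_right _ _))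
  have hφh := hφ n h ⟨hh, hn.2⟩
  rw [Real.dist_0_eq_abs, abs_div, abs_of_pos hh]
  calc |φ h| / h ≤ ω n / h := by gcongr
    _ ≤ ω n / δ (n + 1) := by gcongr; exacts [(abs_nonneg _).trans hφh, hδ _, hn.1.le]
    _ < η := hN n hnN

theorem tendsto_div_nhdsNE_zero {φ : ℝ → ℝ}
    (hpos : Tendsto (fun h => φ h / h) (𝓝[>] 0) (𝓝 0))
    (hneg : Tendsto (fun h => φ (-h) / h) (𝓝[>] 0) (𝓝 0)) :
    Tendsto (fun h => φ h / h) (𝓝[≠] 0) (𝓝 0) := by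
  rw [← nhdsLT_sup_nhdsGT]
  refine Tendsto.sup ?_ hpos
  simpa [Function.comp_def, div_neg] using hneg.neg.comp (tendsto_neg_nhdsLT_neg (a := (0:ℝ)))

theorem tendsto_mul_two_pow_of_tendsto_log_div {u : ℕ → ℝ} {ℓ : ℝ} (hu : ∀ n, 0 < u n)
    (hℓ : Tendsto (fun n => Real.log (u n) / n) atTop (𝓝 ℓ)) (hℓ2 : ℓ + Real.log 2 < 0)
    {w : ℕ → ℕ} (hw : Tendsto (fun n => (w n : ℝ) / n) atTop (𝓝 1)) :
    Tendsto (fun n => u n * 2 ^ w n) atTop (𝓝 0) := by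
  have hlim : Tendsto (fun n : ℕ => (Real.log (u n) / n + w n / n * Real.log 2) * n) atTop atBot :=
    (hℓ.add (hw.mul_const _)).neg_mul_atTop (by simpa using hℓ2) tendsto_natCast_atTop_atTop
  refine (Real.tendsto_exp_atBot.comp hlim).congr' ?_
  filter_upwards [eventually_ne_atTop 0] with n hn
  have hn' : (n : ℝ) ≠ 0 := Nat.cast_ne_zero.2 hn
  rw [Function.comp_apply, add_mul, div_mul_cancel₀ _ hn', div_mul_eq_mul_div,
    div_mul_cancel₀ _ hn',
    Real.exp_add, Real.exp_log (hu n), Real.exp_nat_mul, Real.exp_log two_pos]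

theorem tendsto_comp_succ_add_one_div {v : ℕ → ℕ}
    (hv : Tendsto (fun n => (v n : ℝ) / n) atTop (𝓝 1)) :
    Tendsto (fun n => ((v (n + 1) + 1 : ℕ) : ℝ) / n) atTop (𝓝 1) := by
  have h := (((tendsto_add_atTop_iff_nat 1).2 hv).div (tendsto_natCast_div_add_atTop (1 : ℝ))
    one_ne_zero).add tendsto_one_div_atTop_nhds_zero_nat
  rw [div_one, add_zero] at h
  refine h.congr' ?_
  filter_upwards [eventually_ne_atTop 0] with n hn
  have hn' : (n : ℝ) ≠ 0 := Nat.cast_ne_zero.2 hn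
  simp only [Pi.div_apply]
  push_cast
  field_simp

theorem Nat.infinite_setOf_of_tendsto_count_div {p : ℕ → Prop} [DecidablePred p] {c : ℝ}
    (hp : Tendsto (fun n => (Nat.count p n : ℝ) / n) atTop (𝓝 c)) (hc : c ≠ 0) :
    {k | p k}.Infinite := by
  intro hfin
  refine hc (tendsto_nhds_unique hp (squeeze_zero (fun n => by positivity) (fun n => ?_)
    (tendsto_const_div_atTop_nhds_zero_nat (hfin.toFinset.card : ℝ))))
  gcongr
  exact_mod_cast Nat.count_le_card hfin n

theorem Nat.tendsto_nth_count_div {p : ℕ → Prop} [DecidablePred p] {c : ℝ}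
    (hp : Tendsto (fun n => (Nat.count p n : ℝ) / n) atTop (𝓝 c)) (hc : c ≠ 0) :
    Tendsto (fun n => (Nat.nth p (Nat.count p n) : ℝ) / n) atTop (𝓝 1) := by
  have hinf := Nat.infinite_setOf_of_tendsto_count_div hp hc
  have hnext : Tendsto (fun n => Nat.nth p (Nat.count p n)) atTop atTop :=
    tendsto_atTop_mono (Nat.le_nth_count hinf) tendsto_id
  have h := hp.div (hp.comp hnext) hc
  rw [div_self hc] at h
  refine h.congr' ?_
  filter_upwards [hp.eventually_ne hc, eventually_ne_atTop 0] with n hcount hn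
  have hn' : (n : ℝ) ≠ 0 := Nat.cast_ne_zero.2 hn
  have hm : (Nat.nth p (Nat.count p n) : ℝ) ≠ 0 :=
    Nat.cast_ne_zero.2 (Nat.pos_of_ne_zero hn |>.trans_le (Nat.le_nth_count hinf n)).ne'
  have hc' : (Nat.count p n : ℝ) ≠ 0 := fun h0 => hcount (by simp [h0])
  simp only [Pi.div_apply, Function.comp_apply, Nat.count_nth_of_infinite hinf]
  field_simp

theorem Nat.tendsto_count_not_div {p : ℕ → Prop} [DecidablePred p] {c : ℝ}
    (hp : Tendsto (fun n => (Nat.count p n : ℝ) / n) atTop (𝓝 c)) :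
    Tendsto (fun n => (Nat.count (fun k => ¬ p k) n : ℝ) / n) atTop (𝓝 (1 - c)) := by
  refine (tendsto_const_nhds.sub hp).congr' ?_
  filter_upwards [eventually_ne_atTop 0] with n hn
  have hsum : Nat.count p n + Nat.count (fun k => ¬ p k) n = n := by
    simp only [Nat.count_eq_card_filter_range, Finset.card_filter_add_card_filter_not,
      Finset.card_range]
  have hn' : (n : ℝ) ≠ 0 := Nat.cast_ne_zero.2 hn
  have hsum' : (Nat.count (fun k => ¬ p k) n : ℝ) = n - Nat.count p n := by
    rw [eq_sub_iff_add_eq', ← Nat.cast_add, hsum]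
  rw [hsum', sub_div, div_self hn']

theorem tendsto_div_nhdsGT_zero_of_dyadic_scales {φ : ℝ → ℝ} {δ u : ℕ → ℝ} {C c ℓ : ℝ}
    {p : ℕ → Prop} [DecidablePred p] (hφ : ∀ n, ∀ h ∈ Ioc 0 (δ n), |φ h| ≤ C * u n)
    (hδ : ∀ n, δ n ≤ (2 ^ n)⁻¹) (hpδ : ∀ n k, n ≤ k → p k → ((2 : ℝ) ^ (k + 1))⁻¹ ≤ δ n)
    (hp : Tendsto (fun n => (Nat.count p n : ℝ) / n) atTop (𝓝 c)) (hc : c ≠ 0)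
    (hu : ∀ n, 0 < u n) (hℓ : Tendsto (fun n => Real.log (u n) / n) atTop (𝓝 ℓ))
    (hℓ2 : ℓ + Real.log 2 < 0) :
    Tendsto (fun h => φ h / h) (𝓝[>] 0) (𝓝 0) := by
  have hinf := Nat.infinite_setOf_of_tendsto_count_div hp hc
  set z := fun n => Nat.nth p (Nat.count p n)
  have hz : ∀ n, ((2 : ℝ) ^ (z n + 1))⁻¹ ≤ δ n := fun n =>
    hpδ n _ (Nat.le_nth_count hinf n) (Nat.nth_mem_of_infinite hinf _)
  have hδpos : ∀ n, 0 < δ n := fun n => (by positivity : (0 : ℝ) < _).trans_le (hz n)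
  have hC0 : 0 ≤ C := (mul_nonneg_iff_of_pos_right (hu 0)).1
    ((abs_nonneg _).trans (hφ 0 (δ 0) ⟨hδpos 0, le_rfl⟩))
  have hδ₀ : Tendsto δ atTop (𝓝 0) := by
    refine squeeze_zero (fun n => (hδpos n).le) hδ ?_
    simpa only [inv_pow] using tendsto_pow_atTop_nhds_zero_of_lt_one (by norm_num : (0 : ℝ) ≤ 2⁻¹)
      (by norm_num)
  have hdecay := (tendsto_mul_two_pow_of_tendsto_log_div hu hℓ hℓ2
    (tendsto_comp_succ_add_one_div (Nat.tendsto_nth_count_div hp hc))).const_mul C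
  rw [mul_zero] at hdecay
  refine tendsto_div_nhdsGT_zero_of_abs_le hδpos hδ₀ hφ
    (squeeze_zero (fun n => by have := hu n; have := hδpos (n + 1); positivity) (fun n => ?_)
      hdecay)
  rw [div_le_iff₀ (hδpos _)]
  calc C * u n = C * (u n * 2 ^ (z (n + 1) + 1)) * ((2 : ℝ) ^ (z (n + 1) + 1))⁻¹ := by
        field_simp
    _ ≤ C * (u n * 2 ^ (z (n + 1) + 1)) * δ (n + 1) := by
        have := hu n
        gcongr
        exact hz (n + 1)

noncomputable def binaryValue (b : ℕ → ℕ) : ℝ := ∑' k, (b k : ℝ) / 2 ^ (k + 1)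

noncomputable def binaryPartialSum (b : ℕ → ℕ) (n : ℕ) : ℝ :=
  ∑ k ∈ Finset.range n, (b k : ℝ) / 2 ^ (k + 1)

section Binary

variable {b : ℕ → ℕ}

theorem summable_binary (hb : ∀ k, b k ≤ 1) : Summable fun k => (b k : ℝ) / 2 ^ (k + 1) := by
  refine (summable_geometric_two' 1).of_nonneg_of_le (fun k => by positivity) fun k => ?_
  rw [div_div, ← pow_succ']
  gcongr
  exact_mod_cast hb k

theorem binaryValue_eq_add (hb : ∀ k, b k ≤ 1) (n : ℕ) :
    binaryValue b = binaryPartialSum b n + binaryValue (fun k => b (k + n)) / 2 ^ n := by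
  rw [binaryValue, ← (summable_binary hb).sum_add_tsum_nat_add n, binaryValue, ← tsum_div_const]
  congr 2 with k
  rw [div_div, ← pow_add, add_right_comm]

theorem binaryValue_add_binaryValue_compl (hb : ∀ k, b k ≤ 1) :
    binaryValue b + binaryValue (fun k => 1 - b k) = 1 := by
  rw [binaryValue, binaryValue,
    ← (summable_binary hb).tsum_add (summable_binary fun k => Nat.sub_le 1 (b k))]
  refine (tsum_congr fun k => ?_).trans (tsum_geometric_two' 1)
  rw [← add_div, Nat.cast_sub (hb k), add_sub_cancel, div_div, ← pow_succ', Nat.cast_one]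

theorem inv_two_pow_le_binaryValue (hb : ∀ k, b k ≤ 1) {k : ℕ} (hk : b k = 1) :
    ((2 : ℝ) ^ (k + 1))⁻¹ ≤ binaryValue b := by
  simpa [hk, binaryValue] using (summable_binary hb).le_tsum k fun j _ => by positivity

theorem binaryValue_nonneg : 0 ≤ binaryValue b :=
  tsum_nonneg fun k => by positivity

theorem binaryValue_le_one_sub_inv_two_pow (hb : ∀ k, b k ≤ 1) {k : ℕ} (hk : b k ≠ 1) :
    binaryValue b ≤ 1 - ((2 : ℝ) ^ (k + 1))⁻¹ := by
  have := inv_two_pow_le_binaryValue (b := fun k => 1 - b k) (fun k => Nat.sub_le 1 (b k))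
    (show 1 - b k = 1 by have := hb k; omega)
  linarith [binaryValue_add_binaryValue_compl hb]

theorem binaryValue_le_one (hb : ∀ k, b k ≤ 1) : binaryValue b ≤ 1 := by
  linarith [binaryValue_add_binaryValue_compl hb, binaryValue_nonneg (b := fun k => 1 - b k)]

theorem inv_two_pow_add_succ (n j : ℕ) : ((2 : ℝ) ^ (n + j + 1))⁻¹ = (2 ^ (j + 1))⁻¹ / 2 ^ n := by
  rw [add_assoc, pow_add, mul_inv, div_eq_mul_inv, mul_comm]

theorem inv_two_pow_le_binaryValue_shift_div (hb : ∀ k, b k ≤ 1) {n k : ℕ} (hnk : n ≤ k)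
    (hk : b k = 1) : ((2 : ℝ) ^ (k + 1))⁻¹ ≤ binaryValue (fun j => b (j + n)) / 2 ^ n := by
  obtain ⟨j, rfl⟩ := Nat.exists_eq_add_of_le hnk
  rw [inv_two_pow_add_succ]
  gcongr
  exact inv_two_pow_le_binaryValue (fun _ => hb _) (by rwa [add_comm])

theorem inv_two_pow_le_one_sub_binaryValue_shift_div (hb : ∀ k, b k ≤ 1) {n k : ℕ}
    (hnk : n ≤ k) (hk : b k ≠ 1) :
    ((2 : ℝ) ^ (k + 1))⁻¹ ≤ (1 - binaryValue (fun j => b (j + n))) / 2 ^ n := by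
  obtain ⟨j, rfl⟩ := Nat.exists_eq_add_of_le hnk
  rw [inv_two_pow_add_succ]
  gcongr
  linarith [binaryValue_le_one_sub_inv_two_pow (b := fun j => b (j + n)) (fun _ => hb _) (k := j)
    (by rwa [add_comm])]

theorem Nat.cast_count_eq_one_eq_sum (hb : ∀ k, b k ≤ 1) (n : ℕ) :
    (Nat.count (b · = 1) n : ℝ) = ∑ k ∈ Finset.range n, (b k : ℝ) := by
  rw [Nat.count_eq_card_filter_range, Finset.natCast_card_filter]
  refine Finset.sum_congr rfl fun k _ => ?_
  rcases Nat.le_one_iff_eq_zero_or_eq_one.1 (hb k) with h | h <;> simp [h]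

end Binary

noncomputable def digitMass (a : ℝ) (b : ℕ → ℕ) (n : ℕ) : ℝ :=
  ∏ k ∈ Finset.range n, if b k = 1 then 1 - a else a

section DigitMass

variable {a : ℝ} {b : ℕ → ℕ}

theorem digitMass_pos (ha0 : 0 < a) (ha1 : a < 1) (n : ℕ) : 0 < digitMass a b n :=
  Finset.prod_pos fun k _ => by split_ifs <;> linarith

theorem digitMass_eq (n : ℕ) :
    digitMass a b n = (1 - a) ^ Nat.count (b · = 1) n * a ^ Nat.count (b · ≠ 1) n := by
  rw [digitMass, Finset.prod_ite, Finset.prod_const, Finset.prod_const,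
    Nat.count_eq_card_filter_range, Nat.count_eq_card_filter_range]

theorem tendsto_log_digitMass_div (ha0 : 0 < a) (ha1 : a < 1) {d : ℝ}
    (hd : Tendsto (fun n => (Nat.count (b · = 1) n : ℝ) / n) atTop (𝓝 d)) :
    Tendsto (fun n => Real.log (digitMass a b n) / n) atTop
      (𝓝 (d * Real.log (1 - a) + (1 - d) * Real.log a)) := by
  refine ((hd.mul_const _).add ((Nat.tendsto_count_not_div hd).mul_const _)).congr fun n => ?_
  rw [digitMass_eq, Real.log_mul (by positivity) (by positivity), Real.log_pow, Real.log_pow,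
    add_div, mul_div_right_comm, mul_div_right_comm (_ : ℝ)]

end DigitMass

namespace deRham

variable {a : ℝ} {L : ℝ → ℝ}

theorem map_add_div_two (hL : deRham a L) {e : ℕ} (he : e ≤ 1) {y : ℝ} (hy : y ∈ Icc 0 1) :
    L ((e + y) / 2) = e * a + (if e = 1 then 1 - a else a) * L y := by
  obtain ⟨hy0, hy1⟩ := hy
  interval_cases e
  · have := hL.2.1 ((0 + y) / 2) ⟨by positivity, by linarith⟩
    simpa [mul_div_cancel₀] using this
  · have := hL.2.2 ((1 + y) / 2) ⟨by linarith, by linarith⟩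
    simp only [Nat.cast_one, one_mul, if_true]
    rw [this]
    ring_nf

theorem map_binaryPartialSum_add (hL : deRham a L) (ha : a ≠ 1) {b : ℕ → ℕ} (hb : ∀ k, b k ≤ 1)
    (n : ℕ) {y : ℝ} (hy : y ∈ Icc 0 1) :
    L (binaryPartialSum b n + y / 2 ^ n) = L (binaryPartialSum b n) + digitMass a b n * L y := by
  induction n generalizing y with
  | zero => simp [binaryPartialSum, digitMass, hL.map_zero ha]
  | succ n ih =>
    have hstep : ∀ y ∈ Icc (0 : ℝ) 1, L (binaryPartialSum b (n + 1) + y / 2 ^ (n + 1)) =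
        L (binaryPartialSum b n) +
          digitMass a b n * (b n * a + (if b n = 1 then 1 - a else a) * L y) := by
      intro y hy
      have hmid : ((b n : ℝ) + y) / 2 ∈ Icc (0 : ℝ) 1 := by
        have : (b n : ℝ) ≤ 1 := by exact_mod_cast hb n
        constructor <;> linarith [hy.1, hy.2]
      rw [← hL.map_add_div_two (hb n) hy, ← ih hmid, binaryPartialSum, binaryPartialSum,
        Finset.sum_range_succ, pow_succ]
      congr 1
      ring
    have h0 := hstep 0 ⟨le_rfl, zero_le_one⟩
    rw [hL.map_zero ha, zero_div, add_zero, mul_zero, add_zero] at h0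
    rw [hstep y hy, h0]
    simp only [digitMass, Finset.prod_range_succ]
    ring

theorem abs_sub_le (hL : deRham a L) (ha0 : 0 < a) (ha1 : a < 1) {b : ℕ → ℕ}
    (hb : ∀ k, b k ≤ 1) {C : ℝ} (hC : ∀ y ∈ Icc (0 : ℝ) 1, |L y| ≤ C) (n : ℕ) {s : ℝ}
    (hs : binaryValue (fun k => b (k + n)) + s ∈ Icc 0 1) :
    |L (binaryValue b + s / 2 ^ n) - L (binaryValue b)| ≤ 2 * C * digitMass a b n := by
  set t := binaryValue (fun k => b (k + n))
  have ht : t ∈ Icc 0 1 := ⟨binaryValue_nonneg, binaryValue_le_one fun _ => hb _⟩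
  rw [binaryValue_eq_add hb n, add_assoc, ← add_div, hL.map_binaryPartialSum_add ha1.ne hb n hs,
    hL.map_binaryPartialSum_add ha1.ne hb n ht, add_sub_add_left_eq_sub, ← mul_sub, abs_mul,
    abs_of_pos (digitMass_pos ha0 ha1 n)]
  calc digitMass a b n * |L (t + s) - L t| ≤ digitMass a b n * (C + C) :=
        mul_le_mul_of_nonneg_left ((abs_sub _ _).trans (add_le_add (hC _ hs) (hC _ ht)))
          (digitMass_pos ha0 ha1 n).le
    _ = 2 * C * digitMass a b n := by ring

section Slopes

variable {b : ℕ → ℕ} {C c ℓ : ℝ}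

theorem tendsto_slope_nhdsGT (hL : deRham a L) (ha0 : 0 < a) (ha1 : a < 1) (hb : ∀ k, b k ≤ 1)
    (hC : ∀ y ∈ Icc (0 : ℝ) 1, |L y| ≤ C)
    (hp : Tendsto (fun n => (Nat.count (b · ≠ 1) n : ℝ) / n) atTop (𝓝 c)) (hc : c ≠ 0)
    (hℓ : Tendsto (fun n => Real.log (digitMass a b n) / n) atTop (𝓝 ℓ))
    (hℓ2 : ℓ + Real.log 2 < 0) :
    Tendsto (fun h => (L (binaryValue b + h) - L (binaryValue b)) / h) (𝓝[>] 0) (𝓝 0) := by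
  refine tendsto_div_nhdsGT_zero_of_dyadic_scales
    (δ := fun n => (1 - binaryValue (fun k => b (k + n))) / 2 ^ n) (fun n h hh => ?_) (fun n => ?_)
    (fun n k hnk hk => inv_two_pow_le_one_sub_binaryValue_shift_div hb hnk hk) hp hc
    (C := 2 * C) (digitMass_pos ha0 ha1) hℓ hℓ2
  · have hs : binaryValue (fun k => b (k + n)) + 2 ^ n * h ∈ Icc 0 1 := by
      have := (le_div_iff₀' (by positivity)).1 hh.2
      exact ⟨add_nonneg binaryValue_nonneg (by have := hh.1; positivity), by linarith⟩
    simpa only [mul_div_cancel_left₀ _ (by positivity : (2 : ℝ) ^ n ≠ 0)]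
      using hL.abs_sub_le ha0 ha1 hb hC n hs
  · rw [div_eq_mul_inv]
    exact mul_le_of_le_one_left (by positivity) (sub_le_self _ binaryValue_nonneg)

theorem tendsto_slope_nhdsLT (hL : deRham a L) (ha0 : 0 < a) (ha1 : a < 1) (hb : ∀ k, b k ≤ 1)
    (hC : ∀ y ∈ Icc (0 : ℝ) 1, |L y| ≤ C)
    (hp : Tendsto (fun n => (Nat.count (b · = 1) n : ℝ) / n) atTop (𝓝 c)) (hc : c ≠ 0)
    (hℓ : Tendsto (fun n => Real.log (digitMass a b n) / n) atTop (𝓝 ℓ))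
    (hℓ2 : ℓ + Real.log 2 < 0) :
    Tendsto (fun h => (L (binaryValue b + -h) - L (binaryValue b)) / h) (𝓝[>] 0) (𝓝 0) := by
  refine tendsto_div_nhdsGT_zero_of_dyadic_scales
    (δ := fun n => binaryValue (fun k => b (k + n)) / 2 ^ n) (fun n h hh => ?_) (fun n => ?_)
    (fun n k hnk hk => inv_two_pow_le_binaryValue_shift_div hb hnk hk) hp hc
    (C := 2 * C) (digitMass_pos ha0 ha1) hℓ hℓ2
  · have hs : binaryValue (fun k => b (k + n)) + -(2 ^ n * h) ∈ Icc 0 1 := by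
      have := (le_div_iff₀' (by positivity)).1 hh.2
      have : 0 < 2 ^ n * h := mul_pos (by positivity) hh.1
      exact ⟨by linarith, by linarith [binaryValue_le_one fun k => hb (k + n)]⟩
    simpa only [neg_div, mul_div_cancel_left₀ _ (by positivity : (2 : ℝ) ^ n ≠ 0)]
      using hL.abs_sub_le ha0 ha1 hb hC n hs
  · rw [div_eq_mul_inv]
    exact mul_le_of_le_one_left (by positivity) (binaryValue_le_one fun k => hb (k + n))

end Slopes

end deRham

theorem deriv_zero_of_density_general (a : ℝ) (ha0 : 0 < a) (ha1 : a < 1)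
    (L : ℝ → ℝ) (hL : deRham a L)
    (ε : ℕ → ℕ) (hε : ∀ n, ε n ≤ 1)
    (x : ℝ) (hx : x = ∑' n : ℕ, (ε (n+1) : ℝ) / 2 ^ (n+1))
    (d : ℝ)
    (hd : Tendsto (fun n : ℕ => (∑ k ∈ Finset.range n, (ε (k+1) : ℝ)) / n)
      atTop (𝓝 d))
    (hd0 : 0 < d) (hd1 : d < 1)
    (hcrit : a ^ (1 - d) * (1-a) ^ d < 1/2) :
    Tendsto (fun h : ℝ => (L (x+h) - L x) / h) (𝓝[≠] 0) (𝓝 0) := by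
  set b : ℕ → ℕ := fun k => ε (k + 1)
  have hb : ∀ k, b k ≤ 1 := fun k => hε (k + 1)
  have h1 : Tendsto (fun n => (Nat.count (b · = 1) n : ℝ) / n) atTop (𝓝 d) := by
    simpa only [Nat.cast_count_eq_one_eq_sum hb] using hd
  have hℓ2 : d * Real.log (1 - a) + (1 - d) * Real.log a + Real.log 2 < 0 := by
    have := Real.log_lt_log (by positivity) hcrit
    rw [Real.log_mul (by positivity) (by positivity), Real.log_rpow ha0,
      Real.log_rpow (by linarith), one_div, Real.log_inv] at this
    linarith
  obtain ⟨C, hC⟩ := isCompact_Icc.exists_bound_of_continuousOn hL.1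
  simp only [Real.norm_eq_abs] at hC
  have hℓ := tendsto_log_digitMass_div ha0 ha1 h1
  subst hx
  exact tendsto_div_nhdsNE_zero
    (hL.tendsto_slope_nhdsGT ha0 ha1 hb hC (Nat.tendsto_count_not_div h1)
      (sub_ne_zero.2 hd1.ne') hℓ hℓ2)
    (hL.tendsto_slope_nhdsLT ha0 ha1 hb hC h1 hd0.ne' hℓ hℓ2)

theorem deriv_zero_of_density (a : ℝ) (ha0 : 0 < a) (ha1 : a < 1)
    (ha : a ≠ 1/2) (L : ℝ → ℝ) (hL : deRham a L)
    (ε : ℕ → ℕ) (hε : ∀ n, ε n ≤ 1)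
    (hinf1 : ∀ N, ∃ n ≥ N, ε n = 1) (hinf0 : ∀ N, ∃ n ≥ N, ε n = 0)
    (x : ℝ) (hx : x = ∑' n : ℕ, (ε (n+1) : ℝ) / 2 ^ (n+1))
    (d : ℝ)
    (hd : Tendsto (fun n : ℕ => (∑ k ∈ Finset.range n, (ε (k+1) : ℝ)) / n)
      atTop (𝓝 d))
    (hd0 : 0 < d) (hd1 : d < 1)
    (hcrit : a ^ (1 - d) * (1-a) ^ d < 1/2) :
    Tendsto (fun h : ℝ => (L (x+h) - L x) / h) (𝓝[≠] 0) (𝓝 0) :=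
  deriv_zero_of_density_general a ha0 ha1 L hL ε hε x hx d hd hd0 hd1 hcrit
end

section
/- Let x be non-dyadic with digit densities D_0(x), D_1(x) ∈ (0,1), let p_k and q_k be the positions of the k-th 0 and k-th 1 respectively in the binary expansion of x, and set f(k) = p_k − k/D_0(x), g(k) = k/D_1(x) − q_k. If f(k) → +∞ as k → ∞, then g(k) → +∞. -/
/-! Let `Z` count zeros. Before the `k`-th one (position `q k`, counting from `0`) there are
exactly `Z (q k) = q k - (k + 1)` zeros, so the `Z (q k)`-th zero `p (Z (q k) - 1)` lies
before `q k`. Writing `q k = (k + 1) + Z (q k)` and `c = (1 - d1) / d1`, this gives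
`g k ≥ c * (f (Z (q k) - 1) + 1)`, and `Z (q k) → ∞` because `Z (p b) = b` and
`q k → ∞`. -/

open Topology Filter Set

namespace Nat

variable {P : ℕ → Prop} {e : ℕ → ℕ}

theorem infinite_ofPred_of_strictMono (he : StrictMono e) (hP : ∀ k, P (e k)) :
    (Set.ofPred P).Infinite :=
  (Set.infinite_range_of_injective he.injective).mono (Set.range_subset_iff.2 hP)

theorem eq_nth_of_strictMono (he : StrictMono e) (hP : ∀ k, P (e k))
    (hsurj : ∀ n, P n → ∃ k, e k = n) : e = nth P := by
  have hinf := infinite_ofPred_of_strictMono he hP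
  funext k
  refine eq_nth_of_strictMonoOn_of_mapsTo_of_surjOn e (fun n hn => ?_) (fun k _ => hP k)
    (he.strictMonoOn _) (fun hfin => absurd hfin hinf)
  obtain ⟨k, rfl⟩ := hsurj n hn
  exact ⟨k, fun hfin => absurd hfin hinf, rfl⟩

variable [DecidablePred P]

theorem count_apply_of_strictMono (he : StrictMono e) (hP : ∀ k, P (e k))
    (hsurj : ∀ n, P n → ∃ k, e k = n) (k : ℕ) : count P (e k) = k := by
  rw [eq_nth_of_strictMono he hP hsurj]
  exact count_nth_of_infinite (infinite_ofPred_of_strictMono he hP) k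

theorem apply_lt_of_lt_count_of_strictMono (he : StrictMono e) (hP : ∀ k, P (e k))
    (hsurj : ∀ n, P n → ∃ k, e k = n) {k n : ℕ} (h : k < count P n) : e k < n := by
  rw [eq_nth_of_strictMono he hP hsurj]
  exact nth_lt_of_lt_count h

end Nat

/-- Positions start at `1`, so `Nat.count (digitPos ε b) N` counts the digits `b` among
`ε 1, …, ε (N - 1)`. -/
def digitPos (ε : ℕ → ℕ) (b n : ℕ) : Prop := 1 ≤ n ∧ ε n = b

instance (ε : ℕ → ℕ) (b : ℕ) : DecidablePred (digitPos ε b) :=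
  fun n => inferInstanceAs (Decidable (1 ≤ n ∧ ε n = b))

theorem count_digitPos_zero_add_count_digitPos_one {ε : ℕ → ℕ} (hε : ∀ n, ε n ≤ 1)
    (N : ℕ) :
    Nat.count (digitPos ε 0) N + Nat.count (digitPos ε 1) N = N - 1 := by
  induction N with
  | zero => simp
  | succ N ih =>
    have := hε N
    rw [Nat.count_succ, Nat.count_succ]
    split_ifs with h0 h1 h1 <;> simp only [digitPos] at h0 h1 <;> omega

theorem zero_drift_mul_le_one_drift {d : ℝ} (hd0 : 0 < d) (hd1 : d < 1) {a b P : ℝ}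
    (hP : P + 1 ≤ a + b) :
    (1 - d) / d * (P - b / (1 - d) + 1) ≤ a / d - (a + b) := by
  have hd1' : 1 - d ≠ 0 := by linarith
  have h : a / d - (a + b) - (1 - d) / d * (P - b / (1 - d) + 1)
      = (1 - d) / d * (a + b - P - 1) := by
    field_simp
    ring
  have : 0 ≤ (1 - d) / d * (a + b - P - 1) :=
    mul_nonneg (div_pos (by linarith) hd0).le (by linarith)
  linarith

theorem zero_positions_drift_iff_one_positions_drift_general
    (ε : ℕ → ℕ) (hε : ∀ n, ε n ≤ 1)
    (d1 : ℝ)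
    (hd0 : 0 < d1) (hd1 : d1 < 1)
    (p : ℕ → ℕ) (hp1 : ∀ k, 1 ≤ p k) (hpm : StrictMono p)
    (hp0 : ∀ k, ε (p k) = 0)
    (hpsurj : ∀ n, 1 ≤ n → ε n = 0 → ∃ k, p k = n)
    (q : ℕ → ℕ) (hq1 : ∀ k, 1 ≤ q k) (hqm : StrictMono q)
    (hq0 : ∀ k, ε (q k) = 1)
    (hqsurj : ∀ n, 1 ≤ n → ε n = 1 → ∃ k, q k = n)
    (hf : Tendsto (fun k : ℕ => (p k : ℝ) - (k+1) / (1 - d1)) atTop atTop) :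
    Tendsto (fun k : ℕ => (k+1) / d1 - (q k : ℝ)) atTop atTop := by
  have hp_digit : ∀ k, digitPos ε 0 (p k) := fun k => ⟨hp1 k, hp0 k⟩
  have hp_surj : ∀ n, digitPos ε 0 n → ∃ k, p k = n := fun n hn => hpsurj n hn.1 hn.2
  set Z := Nat.count (digitPos ε 0)
  have hZq : ∀ k, Z (q k) + (k + 1) = q k := fun k => by
    have hcount : Z (q k) + k = q k - 1 := by
      simpa only [Nat.count_apply_of_strictMono (P := digitPos ε 1) hqm
        (fun k => ⟨hq1 k, hq0 k⟩) (fun n hn => hqsurj n hn.1 hn.2)]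
        using count_digitPos_zero_add_count_digitPos_one hε (q k)
    have := hq1 k
    omega
  have hZ : Tendsto (fun k => Z (q k)) atTop atTop :=
    (tendsto_atTop_atTop_of_monotone (Nat.count_monotone _) fun b =>
      ⟨p b, (Nat.count_apply_of_strictMono hpm hp_digit hp_surj b).ge⟩).comp hqm.tendsto_atTop
  have hlim := ((tendsto_atTop_add_const_right _ 1
    (hf.comp ((tendsto_sub_atTop_nat 1).comp hZ))).const_mul_atTop
      (div_pos (sub_pos.2 hd1) hd0))
  refine tendsto_atTop_mono' atTop ?_ hlim
  filter_upwards [hZ.eventually_ge_atTop 1] with k hk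
  have hlt : p (Z (q k) - 1) < q k :=
    Nat.apply_lt_of_lt_count_of_strictMono hpm hp_digit hp_surj
      (show Z (q k) - 1 < Z (q k) by omega)
  have hq : (q k : ℝ) = (k + 1 : ℝ) + Z (q k) := by
    rw [add_comm]; exact_mod_cast (hZq k).symm
  have hZ1 : ((Z (q k) - 1 : ℕ) : ℝ) + 1 = Z (q k) := by
    rw [Nat.cast_sub hk]; ring
  simp only [Function.comp_apply, hZ1, hq]
  exact zero_drift_mul_le_one_drift hd0 hd1 (by rw [← hq]; exact_mod_cast hlt)

theorem zero_positions_drift_iff_one_positions_drift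
    (ε : ℕ → ℕ) (hε : ∀ n, ε n ≤ 1)
    (hinf1 : ∀ N, ∃ n ≥ N, ε n = 1) (hinf0 : ∀ N, ∃ n ≥ N, ε n = 0)
    (d1 : ℝ)
    (hd : Tendsto (fun n : ℕ => (∑ k ∈ Finset.range n, (ε (k+1) : ℝ)) / n)
      atTop (𝓝 d1))
    (hd0 : 0 < d1) (hd1 : d1 < 1)
    (p : ℕ → ℕ) (hp1 : ∀ k, 1 ≤ p k) (hpm : StrictMono p)
    (hp0 : ∀ k, ε (p k) = 0)
    (hpsurj : ∀ n, 1 ≤ n → ε n = 0 → ∃ k, p k = n)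
    (q : ℕ → ℕ) (hq1 : ∀ k, 1 ≤ q k) (hqm : StrictMono q)
    (hq0 : ∀ k, ε (q k) = 1)
    (hqsurj : ∀ n, 1 ≤ n → ε n = 1 → ∃ k, q k = n)
    (hf : Tendsto (fun k : ℕ => (p k : ℝ) - (k+1) / (1 - d1)) atTop atTop) :
    Tendsto (fun k : ℕ => (k+1) / d1 - (q k : ℝ)) atTop atTop :=
  zero_positions_drift_iff_one_positions_drift_general ε hε d1 hd0 hd1 p hp1 hpm hp0 hpsurj q hq1
    hqm hq0 hqsurj hf
end
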